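/- arXiv:1205.1488 — 5 statements merged into one kernel-verified Lean document; each statement's English description precedes it below -/
import Mathlib

section
/- Let X be a measurable space whose σ-algebra is countably generated. Then the σ-algebra on the space of probability measures on X — namely, the coarsest σ-algebra making all evaluation maps ev_B : P ↦ P(B) measurable for measurable B ⊆ X — is countably generated. -/
/-! Closing a countable generating family under finite intersections gives a countable generating
π-system `S`. By the π-λ theorem, measurability of a map into probability measures can be tested on
the sets of `S`, so the σ-algebra on `ProbabilityMeasure X` is the pullback of the product σ-algebra
along `P ↦ (P s)_{s ∈ S}`. A countable power of `ℝ≥0∞` is second countable and Borel, hence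
countably generated, and so is every pullback of it. -/

open MeasureTheory

/-- The space of probability measures, as a subtype of the space of measures, carries
the σ-algebra induced by the σ-algebra on measures, i.e. the coarsest σ-algebra for
which all evaluation maps `P ↦ P B` (for `B` measurable) are measurable. -/
instance probabilityMeasureMeasurableSpace {X : Type*} [MeasurableSpace X] :
    MeasurableSpace (ProbabilityMeasure X) :=
  Subtype.instMeasurableSpace

open MeasurableSpace
open scoped ENNReal

theorem MeasurableSpace.exists_countable_isPiSystem_generateFrom (α : Type*)
    [m : MeasurableSpace α] [CountablyGenerated α] :
    ∃ T : Set (Set α), T.Countable ∧ IsPiSystem T ∧ m = generateFrom T := by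
  obtain ⟨S, hSc, rfl⟩ := CountablyGenerated.isCountablyGenerated (α := α)
  refine ⟨Set.sInter '' {t | t.Finite ∧ t ⊆ S},
    (Set.countable_ofPred_finite_subset hSc).image _, ?_, ?_⟩
  · rintro _ ⟨a, ⟨haf, haS⟩, rfl⟩ _ ⟨b, ⟨hbf, hbS⟩, rfl⟩ -
    exact ⟨a ∪ b, ⟨haf.union hbf, Set.union_subset haS hbS⟩, Set.sInter_union a b⟩
  · refine le_antisymm (generateFrom_mono fun s hs => ?_) (generateFrom_le ?_)
    · exact ⟨{s}, ⟨Set.finite_singleton s, Set.singleton_subset_iff.2 hs⟩, Set.sInter_singleton s⟩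
    · rintro _ ⟨t, ⟨htf, htS⟩, rfl⟩
      exact .sInter htf.countable fun u hu => measurableSet_generateFrom (htS hu)

theorem MeasureTheory.ProbabilityMeasure.measurableSpace_eq_comap_of_isPiSystem
    {X : Type*} [mX : MeasurableSpace X] {S : Set (Set X)}
    (hgen : mX = generateFrom S) (hpi : IsPiSystem S) :
    probabilityMeasureMeasurableSpace =
      MeasurableSpace.comap (fun (P : ProbabilityMeasure X) (s : S) => (P : Measure X) s)
        MeasurableSpace.pi := by
  refine le_antisymm ?_ ?_
  · let Φ : ProbabilityMeasure X → S → ℝ≥0∞ := fun P s => (P : Measure X) s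
    let : MeasurableSpace (ProbabilityMeasure X) := MeasurableSpace.comap Φ .pi
    refine measurable_iff_comap_le.1 (Measurable.measure_of_isPiSystem_of_isProbabilityMeasure
      (μ := fun P : ProbabilityMeasure X => (P : Measure X)) hgen hpi fun s hs => ?_)
    exact (comap_measurable Φ).eval (a := (⟨s, hs⟩ : S))
  · refine measurable_iff_comap_le.1 (measurable_pi_lambda _ fun s => ?_)
    have hs : MeasurableSet (s : Set X) := hgen ▸ measurableSet_generateFrom s.2
    exact (Measure.measurable_coe hs).comp measurable_subtype_coe

/-- If the σ-algebra of `X` is countably generated, then so is the σ-algebra on the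
space of probability measures on `X`. -/
theorem stmt_7 {X : Type*} [MeasurableSpace X] [MeasurableSpace.CountablyGenerated X] :
    MeasurableSpace.CountablyGenerated (ProbabilityMeasure X) := by
  obtain ⟨S, hSc, hpi, hgen⟩ := exists_countable_isPiSystem_generateFrom X
  have : Countable S := hSc.to_subtype
  rw [ProbabilityMeasure.measurableSpace_eq_comap_of_isPiSystem hgen hpi]
  exact CountablyGenerated.comap _
end

section
/- Let X and Y be measurable spaces such that the σ-algebra of Y is countably generated and separates points (for any two distinct points of Y there is a measurable set containing exactly one of them). Let κ be a Markov kernel from X to Y such that κ(x)(B) ∈ {0,1} for every x ∈ X and every measurable B ⊆ Y. Then there exists a measurable function f : X → Y such that κ is the deterministic kernel of f, i.e., κ(x) is the Dirac measure at f(x) for every x ∈ X. -/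
/-!
A zero-one probability measure `μ` on a countably generated space decides every generator `Aₙ`:
almost every point lies in `Aₙ` exactly when `μ Aₙ = 1`. Hence almost every point `x` satisfies
these countably many conditions simultaneously, and any such `x` has `μ`-almost everything in its
measurable atom, which forces `μ = δₓ`. Choosing such a point for each `κ a` gives `f`, which is
measurable because `f⁻¹' B = {a | κ a B = 1}`.
-/

open MeasureTheory ProbabilityTheory MeasurableSpace Set

namespace MeasureTheory

variable {α : Type*} {mα : MeasurableSpace α} {μ : Measure α} [IsProbabilityMeasure μ]

lemma Measure.eq_dirac_of_measure_measurableAtom_eq_one {x : α}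
    (hx : μ (measurableAtom x) = 1) : μ = Measure.dirac x := by
  have measure_eq_one {s : Set α} (hs : MeasurableSet s) (hxs : x ∈ s) : μ s = 1 :=
    le_antisymm prob_le_one (hx ▸ measure_mono (measurableAtom_subset hs hxs))
  ext s hs
  by_cases hxs : x ∈ s
  · rw [Measure.dirac_apply_of_mem hxs, measure_eq_one hs hxs]
  · rw [Measure.dirac_apply' _ hs, indicator_of_notMem hxs]
    exact (prob_compl_eq_one_iff hs).1 (measure_eq_one hs.compl hxs)

namespace IsZeroOneMeasure

variable [IsZeroOneMeasure μ]

lemma ae_mem_iff_measure_eq_one {s : Set α} (hs : MeasurableSet s) :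
    ∀ᵐ x ∂μ, x ∈ s ↔ μ s = 1 := by
  rcases μ.zero_one s with h | h
  · filter_upwards [measure_eq_zero_iff_ae_notMem.1 h] with x hx
    simp [hx, h]
  · filter_upwards [mem_ae_iff.2 ((prob_compl_eq_zero_iff hs).2 h)] with x hx
    simp [hx, h]

theorem exists_eq_dirac_of_countablyGenerated [CountablyGenerated α] :
    ∃ x, μ = Measure.dirac x := by
  set A := natGeneratingSequence α
  have hae : ∀ᵐ y ∂μ, ∀ n, y ∈ A n ↔ μ (A n) = 1 :=
    ae_all_iff.2 fun n ↦ ae_mem_iff_measure_eq_one (measurableSet_natGeneratingSequence n)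
  obtain ⟨x, hx⟩ := hae.exists
  have hatom : ∀ᵐ y ∂μ, y ∈ measurableAtom x := by
    filter_upwards [hae] with y hy
    simp only [measurableAtom_eq_countablyGeneratedAtom_natGeneratingSequence,
      countablyGeneratedAtom, mem_iInter]
    intro n
    split_ifs with hxn
    · exact (hy n).2 ((hx n).1 hxn)
    · exact fun hyn ↦ hxn ((hx n).2 ((hy n).1 hyn))
  exact ⟨x, Measure.eq_dirac_of_measure_measurableAtom_eq_one
    ((prob_compl_eq_zero_iff (measurableSet_measurableAtom x)).1 (mem_ae_iff.1 hatom))⟩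

end IsZeroOneMeasure

end MeasureTheory

lemma ProbabilityTheory.Kernel.measurable_of_forall_eq_dirac {α β : Type*}
    {mα : MeasurableSpace α} {mβ : MeasurableSpace β} (κ : Kernel α β) {f : α → β}
    (hf : ∀ a, κ a = Measure.dirac (f a)) :
    Measurable f := by
  intro s hs
  have : f ⁻¹' s = (fun a ↦ κ a s) ⁻¹' {1} := by
    ext a
    simp [hf, Measure.dirac_apply' _ hs, indicator_eq_one_iff_mem]
  rw [this]
  exact κ.measurable_coe hs (measurableSet_singleton 1)

theorem stmt_8_general {X Y : Type*} [MeasurableSpace X] [MeasurableSpace Y]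
    [MeasurableSpace.CountablyGenerated Y]
    (κ : Kernel X Y) [IsMarkovKernel κ]
    (hκ : ∀ (x : X) (B : Set Y), MeasurableSet B → κ x B = 0 ∨ κ x B = 1) :
    ∃ f : X → Y, Measurable f ∧ ∀ x : X, κ x = Measure.dirac (f x) := by
  have (x : X) : IsZeroOneMeasure (κ x) := ⟨hκ x⟩
  choose f hf using fun x ↦ IsZeroOneMeasure.exists_eq_dirac_of_countablyGenerated (μ := κ x)
  exact ⟨f, κ.measurable_of_forall_eq_dirac hf, hf⟩

theorem stmt_8 {X Y : Type*} [MeasurableSpace X] [MeasurableSpace Y]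
    [MeasurableSpace.CountablyGenerated Y] [MeasurableSpace.SeparatesPoints Y]
    (κ : Kernel X Y) [IsMarkovKernel κ]
    (hκ : ∀ (x : X) (B : Set Y), MeasurableSet B → κ x B = 0 ∨ κ x B = 1) :
    ∃ f : X → Y, Measurable f ∧ ∀ x : X, κ x = Measure.dirac (f x) :=
  stmt_8_general κ hκ
end

section
/- Let X and Y be measurable spaces with countably generated σ-algebras, and let J be a probability measure on X × Y (with the product σ-algebra) whose marginals P_X = J.map(fst) and P_Y = J.map(snd) are perfect. Then there exists a Markov kernel f from Y to X such that P_Y.bind(f) = P_X and, for all measurable A ⊆ X and B ⊆ Y, J(A × B) = ∫_B f(y)(A) dP_Y(y). -/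
open MeasureTheory ProbabilityTheory

/-- A measure `μ` on a measurable space `Z` is *perfect* if for every measurable
function `g : Z → ℝ` there exists a Borel set `E ⊆ range g` with
`μ (g ⁻¹' E) = μ univ`. -/
def IsPerfect {Z : Type*} [MeasurableSpace Z] (μ : Measure Z) : Prop :=
  ∀ g : Z → ℝ, Measurable g →
    ∃ E : Set ℝ, MeasurableSet E ∧ E ⊆ Set.range g ∧ μ (g ⁻¹' E) = μ Set.univ

/-!
Since `X` is countably generated, its σ-algebra is pulled back from `ℝ` along a single
measurable map `g`. Disintegrating the law of `(y, g x)` on `Y × ℝ`, which is possible because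
`ℝ` is standard Borel, gives a kernel from `Y` to `ℝ`. Perfectness of `P_X` gives a Borel set
`E ⊆ range g` of full measure, on which `g` has a measurable right inverse `s`; pushing the
kernel forward along `s` gives the kernel to `X`, since almost every conditional law lives on
`E`, where `g ∘ s = id`.
-/

theorem MeasurableSpace.exists_comap_real_eq (α : Type*) [m : MeasurableSpace α]
    [CountablyGenerated α] : ∃ g : α → ℝ, MeasurableSpace.comap g inferInstance = m := by
  obtain ⟨e, he⟩ := exists_measurableEmbedding_real (ℕ → Bool)
  refine ⟨e ∘ mapNatBool α, ?_⟩
  rw [← comap_comp, he.comap_eq]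
  refine le_antisymm (measurable_mapNatBool α).comap_le ?_
  conv_lhs => rw [← generateFrom_natGeneratingSequence α]
  refine generateFrom_le ?_
  rintro - ⟨n, rfl⟩
  exact ⟨{y | y n = true}, measurableSet_eq_fun (measurable_pi_apply n) measurable_const,
    by ext; simp [mapNatBool]⟩

theorem measurable_of_measurable_comp_of_comap_eq {α β γ : Type*} [mα : MeasurableSpace α]
    [mβ : MeasurableSpace β] [MeasurableSpace γ] {g : α → β}
    (hg : MeasurableSpace.comap g mβ = mα) {s : γ → α} (hgs : Measurable (g ∘ s)) :
    Measurable s := by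
  rw [measurable_iff_comap_le, ← hg, MeasurableSpace.comap_comp]
  exact hgs.comap_le

theorem exists_measurable_rightInvOn_of_comap_eq {α β : Type*} [Nonempty α]
    [mα : MeasurableSpace α] [mβ : MeasurableSpace β] {g : α → β}
    (hg : MeasurableSpace.comap g mβ = mα) {E : Set β} (hE : MeasurableSet E)
    (hE_range : E ⊆ Set.range g) : ∃ s : β → α, Measurable s ∧ Set.RightInvOn s g E := by
  classical
  choose! s hs using fun r (hr : r ∈ E) ↦ hE_range hr
  let x₀ : α := Classical.arbitrary α
  have hinv : Set.RightInvOn (E.piecewise s fun _ ↦ x₀) g E := fun r hr ↦ by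
    simp [Set.piecewise_eq_of_mem _ _ _ hr, hs r hr]
  refine ⟨E.piecewise s fun _ ↦ x₀, measurable_of_measurable_comp_of_comap_eq hg ?_, hinv⟩
  have : g ∘ E.piecewise s (fun _ ↦ x₀) = E.piecewise id fun _ ↦ g x₀ := by
    ext r
    by_cases hr : r ∈ E
    · simp [hr, hs r hr]
    · simp [hr]
  rw [this]
  exact measurable_id.piecewise hE measurable_const

theorem MeasureTheory.Measure.map_map_eq_self_of_rightInvOn {α β : Type*} [MeasurableSpace α]
    [MeasurableSpace β] {ν : Measure β} {g : α → β} {s : β → α} {E : Set β}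
    (hg : Measurable g) (hs : Measurable s) (hinv : Set.RightInvOn s g E)
    (hνE : ∀ᵐ r ∂ν, r ∈ E) : (ν.map s).map g = ν := by
  rw [Measure.map_map hg hs]
  conv_rhs => rw [← Measure.map_id (μ := ν)]
  exact Measure.map_congr (hνE.mono fun r hr ↦ hinv hr)

theorem exists_markovKernel_measure_prod_eq_setLIntegral {X Y : Type*} [Nonempty X]
    [mX : MeasurableSpace X] [MeasurableSpace Y] (J : Measure (X × Y)) [IsFiniteMeasure J]
    {g : X → ℝ} (hg : MeasurableSpace.comap g inferInstance = mX) {E : Set ℝ}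
    (hE : MeasurableSet E) (hE_range : E ⊆ Set.range g)
    (hJE : ∀ᵐ x ∂J.map Prod.fst, g x ∈ E) :
    ∃ f : Kernel Y X, IsMarkovKernel f ∧ ∀ A B, MeasurableSet A → MeasurableSet B →
      J (A ×ˢ B) = ∫⁻ y in B, f y A ∂J.map Prod.snd := by
  have hgm : Measurable g := measurable_iff_comap_le.2 hg.le
  obtain ⟨s, hs, hinv⟩ := exists_measurable_rightInvOn_of_comap_eq hg hE hE_range
  have hφ : Measurable fun p : X × Y ↦ (p.2, g p.1) := by fun_prop
  set ρ : Measure (Y × ℝ) := J.map fun p ↦ (p.2, g p.1)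
  have hρ_fst : ρ.fst = J.map Prod.snd := by
    rw [Measure.fst, Measure.map_map measurable_fst hφ]
    rfl
  have hκE : ∀ᵐ y ∂ρ.fst, ∀ᵐ r ∂ρ.condKernel y, r ∈ E := by
    refine Measure.ae_ae_of_ae_compProd (p := fun q ↦ q.2 ∈ E) ?_
    rw [ρ.disintegrate ρ.condKernel, ae_map_iff hφ.aemeasurable (measurable_snd hE)]
    exact ae_of_ae_map measurable_fst.aemeasurable hJE
  refine ⟨ρ.condKernel.map s, Kernel.IsMarkovKernel.map _ hs, fun A B hA hB ↦ ?_⟩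
  obtain ⟨T, hT, rfl⟩ : ∃ T, MeasurableSet T ∧ g ⁻¹' T = A := by
    rw [← hg] at hA
    exact hA
  calc J ((g ⁻¹' T) ×ˢ B) = ρ (B ×ˢ T) := by
        rw [Measure.map_apply hφ (hB.prod hT)]
        exact congrArg J (Set.ext fun _ ↦ and_comm)
    _ = ∫⁻ y in B, ρ.condKernel y T ∂ρ.fst :=
        (Measure.setLIntegral_condKernel_eq_measure_prod hB hT).symm
    _ = ∫⁻ y in B, ρ.condKernel.map s y (g ⁻¹' T) ∂J.map Prod.snd := by
        rw [← hρ_fst]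
        refine setLIntegral_congr_fun_ae hB (hκE.mono fun y hy _ ↦ ?_)
        rw [Kernel.map_apply _ hs, ← Measure.map_apply hgm hT,
          (ρ.condKernel y).map_map_eq_self_of_rightInvOn hgm hs hinv hy]

theorem bind_eq_map_fst_of_measure_prod_eq {X Y : Type*} [MeasurableSpace X] [MeasurableSpace Y]
    {J : Measure (X × Y)} {f : Kernel Y X}
    (hf : ∀ A B, MeasurableSet A → MeasurableSet B →
      J (A ×ˢ B) = ∫⁻ y in B, f y A ∂J.map Prod.snd) :
    (J.map Prod.snd).bind (fun y ↦ f y) = J.map Prod.fst := by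
  ext A hA
  rw [Measure.bind_apply hA f.measurable.aemeasurable, Measure.map_apply measurable_fst hA,
    ← Set.prod_univ, hf A _ hA MeasurableSet.univ, Measure.restrict_univ]

theorem stmt_10_general {X Y : Type*} [MeasurableSpace X] [MeasurableSpace Y]
    [MeasurableSpace.CountablyGenerated X]
    (J : Measure (X × Y)) [IsProbabilityMeasure J]
    (hPX : IsPerfect (J.map Prod.fst)) :
    ∃ f : Kernel Y X, IsMarkovKernel f ∧
      (J.map Prod.snd).bind (fun y => f y) = J.map Prod.fst ∧
      ∀ (A : Set X) (B : Set Y), MeasurableSet A → MeasurableSet B →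
        J (A ×ˢ B) = ∫⁻ y in B, f y A ∂(J.map Prod.snd) := by
  obtain ⟨g, hg⟩ := MeasurableSpace.exists_comap_real_eq X
  have hgm : Measurable g := measurable_iff_comap_le.2 hg.le
  obtain ⟨E, hE, hE_range, hE_full⟩ := hPX g hgm
  have : IsProbabilityMeasure (J.map Prod.fst) :=
    Measure.isProbabilityMeasure_map measurable_fst.aemeasurable
  have : Nonempty X := nonempty_of_isProbabilityMeasure (J.map Prod.fst)
  have hJE : ∀ᵐ x ∂J.map Prod.fst, g x ∈ E :=
    (ae_iff_measure_eq (hgm hE).nullMeasurableSet).2 hE_full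
  obtain ⟨f, hf, hJ⟩ := exists_markovKernel_measure_prod_eq_setLIntegral J hg hE hE_range hJE
  exact ⟨f, hf, bind_eq_map_fst_of_measure_prod_eq hJ, hJ⟩

theorem stmt_10 {X Y : Type*} [MeasurableSpace X] [MeasurableSpace Y]
    [MeasurableSpace.CountablyGenerated X] [MeasurableSpace.CountablyGenerated Y]
    (J : Measure (X × Y)) [IsProbabilityMeasure J]
    (hPX : IsPerfect (J.map Prod.fst)) (hPY : IsPerfect (J.map Prod.snd)) :
    ∃ f : Kernel Y X, IsMarkovKernel f ∧
      (J.map Prod.snd).bind (fun y => f y) = J.map Prod.fst ∧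
      ∀ (A : Set X) (B : Set Y), MeasurableSet A → MeasurableSet B →
        J (A ×ˢ B) = ∫⁻ y in B, f y A ∂(J.map Prod.snd) :=
  stmt_10_general J hPX
end

section
/- Let X and Y be measurable spaces with countably generated σ-algebras, let J be a probability measure on X × Y with perfect marginals P_X = J.map(fst) and P_Y = J.map(snd), and let f and f' be Markov kernels from Y to X each satisfying J(A × B) = ∫_B f(y)(A) dP_Y(y) and J(A × B) = ∫_B f'(y)(A) dP_Y(y) for all measurable A ⊆ X, B ⊆ Y. Then f(y) = f'(y) for P_Y-almost every y ∈ Y. -/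
open MeasureTheory ProbabilityTheory

/-! Both kernels disintegrate the same measure on rectangles, so their composition-products with
`μ` agree on rectangles, hence everywhere; since `β` is countably generated, equal
composition-products force the kernels to agree `μ`-a.e. -/

lemma ProbabilityTheory.Kernel.ae_eq_of_setLIntegral_eq {α β : Type*} [MeasurableSpace α]
    [MeasurableSpace β] [MeasurableSpace.CountablyGenerated β] {μ : Measure α}
    [IsFiniteMeasure μ] {κ η : Kernel α β} [IsFiniteKernel κ] [IsFiniteKernel η]
    (h : ∀ (s : Set α) (t : Set β), MeasurableSet s → MeasurableSet t →
      ∫⁻ a in s, κ a t ∂μ = ∫⁻ a in s, η a t ∂μ) :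
    κ =ᵐ[μ] η :=
  Kernel.ae_eq_of_compProd_eq <| Measure.ext_prod fun hs ht => by
    rw [Measure.compProd_apply_prod hs ht, Measure.compProd_apply_prod hs ht, h _ _ hs ht]

theorem stmt_11_general {X Y : Type*} [MeasurableSpace X] [MeasurableSpace Y]
    [MeasurableSpace.CountablyGenerated X]
    (J : Measure (X × Y)) [IsProbabilityMeasure J]
    (f f' : Kernel Y X) [IsMarkovKernel f] [IsMarkovKernel f']
    (hf : ∀ (A : Set X) (B : Set Y), MeasurableSet A → MeasurableSet B →
      J (A ×ˢ B) = ∫⁻ y in B, f y A ∂(J.map Prod.snd))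
    (hf' : ∀ (A : Set X) (B : Set Y), MeasurableSet A → MeasurableSet B →
      J (A ×ˢ B) = ∫⁻ y in B, f' y A ∂(J.map Prod.snd)) :
    ∀ᵐ y ∂(J.map Prod.snd), f y = f' y :=
  Kernel.ae_eq_of_setLIntegral_eq fun B A hB hA => by rw [← hf A B hA hB, ← hf' A B hA hB]

theorem stmt_11 {X Y : Type*} [MeasurableSpace X] [MeasurableSpace Y]
    [MeasurableSpace.CountablyGenerated X] [MeasurableSpace.CountablyGenerated Y]
    (J : Measure (X × Y)) [IsProbabilityMeasure J]
    (hPX : IsPerfect (J.map Prod.fst)) (hPY : IsPerfect (J.map Prod.snd))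
    (f f' : Kernel Y X) [IsMarkovKernel f] [IsMarkovKernel f']
    (hf : ∀ (A : Set X) (B : Set Y), MeasurableSet A → MeasurableSet B →
      J (A ×ˢ B) = ∫⁻ y in B, f y A ∂(J.map Prod.snd))
    (hf' : ∀ (A : Set X) (B : Set Y), MeasurableSet A → MeasurableSet B →
      J (A ×ˢ B) = ∫⁻ y in B, f' y A ∂(J.map Prod.snd)) :
    ∀ᵐ y ∂(J.map Prod.snd), f y = f' y :=
  stmt_11_general J f f' hf hf'
end

section
/- Let H and D be measurable spaces with countably generated σ-algebras, let P_H be a perfect probability measure on H, and let S be a Markov kernel from H to D such that the probability measure P_D := P_H.bind(S) on D is perfect. Then there exists a Markov kernel I from D to H such that for all measurable A ⊆ H and B ⊆ D, ∫_A S(h)(B) dP_H(h) = ∫_B I(d)(A) dP_D(d); moreover I is unique up to a P_D-null set: if I' is another Markov kernel from D to H satisfying the same identity for all measurable A and B, then I(d) = I'(d) for P_D-almost every d ∈ D. -/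
/-!
The product rule says exactly that `P_D ⊗ₘ I` is the joint law `(P_H ⊗ₘ S).map Prod.swap`, so
`I` is a disintegration of that law, and uniqueness is the a.e. uniqueness of kernels with a
given composition-product. For existence, the countably generated σ-algebra of `H` is pulled back
from the Borel sets by a measurable `f : H → ℝ`. Disintegrating the joint law pushed forward along
`f` gives a kernel into `ℝ`, which is pulled back to `H` along a section `s` of `f`: perfectness of
`P_H` provides a Borel set of full measure inside `range f` on which `s` can be chosen, and `s` is
measurable because `f ∘ s` is.
-/

open MeasureTheory ProbabilityTheory

namespace MeasurableSpace

lemma comap_mapNatBool (α : Type*) [m : MeasurableSpace α] [CountablyGenerated α] :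
    MeasurableSpace.comap (mapNatBool α) inferInstance = m := by
  refine le_antisymm (measurable_mapNatBool α).comap_le ?_
  conv_lhs => rw [← generateFrom_natGeneratingSequence α]
  refine generateFrom_le ?_
  rintro _ ⟨n, rfl⟩
  exact ⟨(fun y ↦ y n) ⁻¹' {true}, measurable_pi_apply n (measurableSet_singleton true),
    by ext; simp [mapNatBool]⟩

lemma exists_measurable_comap_eq_real (α : Type*) [m : MeasurableSpace α]
    [CountablyGenerated α] :
    ∃ f : α → ℝ, Measurable f ∧ MeasurableSpace.comap f inferInstance = m := by
  obtain ⟨e, he⟩ := exists_measurableEmbedding_real (ℕ → Bool)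
  exact ⟨e ∘ mapNatBool α, he.measurable.comp (measurable_mapNatBool α), by
    rw [← comap_comp, he.comap_eq, comap_mapNatBool]⟩

end MeasurableSpace

lemma MeasureTheory.Measure.ext_of_map_prodMap_eq {α Ω β : Type*} [MeasurableSpace α]
    [mΩ : MeasurableSpace Ω] [MeasurableSpace β] {f : Ω → β} (hf : Measurable f)
    (hcomap : MeasurableSpace.comap f inferInstance = mΩ) {μ ν : Measure (α × Ω)}
    [IsFiniteMeasure μ] (h : μ.map (Prod.map id f) = ν.map (Prod.map id f)) : μ = ν := by
  refine Measure.ext_prod fun {B A} hB hA ↦ ?_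
  obtain ⟨A', hA', rfl⟩ : MeasurableSet[MeasurableSpace.comap f inferInstance] A := hcomap ▸ hA
  have h_rect := congrArg (· (B ×ˢ A')) h
  simpa [Measure.map_apply (measurable_id.prodMap hf) (hB.prod hA'),
    Set.preimage_prod_map_prod] using h_rect

lemma IsPerfect.exists_measurable_ae_rightInverse {Ω : Type*} [mΩ : MeasurableSpace Ω]
    [Nonempty Ω] {μ : Measure Ω} [IsFiniteMeasure μ] (hμ : IsPerfect μ) {f : Ω → ℝ}
    (hf : Measurable f) (hcomap : MeasurableSpace.comap f inferInstance = mΩ) :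
    ∃ s : ℝ → Ω, Measurable s ∧ ∀ᵐ x ∂μ.map f, f (s x) = x := by
  classical
  obtain ⟨E, hE, hE_range, hE_full⟩ := hμ f hf
  let c := Classical.arbitrary Ω
  let s : ℝ → Ω := E.piecewise (Function.invFun f) fun _ ↦ c
  have hfs : ∀ x ∈ E, f (s x) = x := fun x hx ↦ by
    simp only [s, Set.piecewise_eq_of_mem _ _ _ hx]
    exact Function.invFun_eq (hE_range hx)
  refine ⟨s, ?_, ?_⟩
  · have h_comp : f ∘ s = E.piecewise id fun _ ↦ f c := by
      ext x
      by_cases hx : x ∈ E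
      · simp [hx, hfs x hx]
      · simp [hx, s]
    rw [measurable_iff_comap_le, ← hcomap, MeasurableSpace.comap_comp,
      ← measurable_iff_comap_le, h_comp]
    exact measurable_id.piecewise hE measurable_const
  · have hE_ae : E ∈ ae (μ.map f) := by
      rw [mem_ae_iff, measure_compl hE (measure_ne_top _ _), Measure.map_apply hf hE, hE_full,
        Measure.map_apply hf .univ, Set.preimage_univ, tsub_self]
    filter_upwards [hE_ae] using hfs

theorem IsPerfect.exists_isMarkovKernel_compProd_eq {α Ω : Type*} [MeasurableSpace α]
    [MeasurableSpace Ω] [MeasurableSpace.CountablyGenerated Ω] [Nonempty Ω]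
    {ρ : Measure (α × Ω)} [IsFiniteMeasure ρ] (hρ : IsPerfect ρ.snd) :
    ∃ κ : Kernel α Ω, IsMarkovKernel κ ∧ ρ.fst ⊗ₘ κ = ρ := by
  obtain ⟨f, hf, hcomap⟩ := MeasurableSpace.exists_measurable_comap_eq_real Ω
  obtain ⟨s, hs, hfs⟩ := hρ.exists_measurable_ae_rightInverse hf hcomap
  have hmap : Measurable (Prod.map id f : α × Ω → α × ℝ) := measurable_id.prodMap hf
  set ρ' := ρ.map (Prod.map id f)
  have hfst : ρ'.fst = ρ.fst := by
    rw [Measure.fst, Measure.fst, Measure.map_map measurable_fst hmap]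
    rfl
  have hsnd : ρ'.snd = ρ.snd.map f := by
    rw [Measure.snd, Measure.snd, Measure.map_map measurable_snd hmap,
      Measure.map_map hf measurable_snd]
    rfl
  have h_section : ∀ᵐ a ∂ρ'.fst, ∀ᵐ x ∂ρ'.condKernel a, f (s x) = x := by
    refine Measure.ae_ae_of_ae_compProd (p := fun p ↦ f (s p.2) = p.2) ?_
    rw [Measure.disintegrate]
    rw [← hsnd] at hfs
    exact ae_of_ae_map measurable_snd.aemeasurable hfs
  refine ⟨ρ'.condKernel.map s, Kernel.IsMarkovKernel.map _ hs, ?_⟩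
  refine Measure.ext_of_map_prodMap_eq hf hcomap ?_
  calc (ρ.fst ⊗ₘ ρ'.condKernel.map s).map (Prod.map id f)
      = ρ'.fst ⊗ₘ (ρ'.condKernel.map s).map f := by rw [hfst, Measure.compProd_map hf]
    _ = ρ'.fst ⊗ₘ ρ'.condKernel := by
      refine Measure.compProd_congr ?_
      filter_upwards [h_section] with a ha
      rw [Kernel.map_apply _ hf, Kernel.map_apply _ hs, Measure.map_map hf hs]
      exact (Measure.map_congr ha).trans Measure.map_id
    _ = ρ' := Measure.disintegrate _ _

lemma MeasureTheory.Measure.compProd_eq_map_swap_iff {α β : Type*} [MeasurableSpace α] [MeasurableSpace β]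
    {μ : Measure α} {ν : Measure β} [SFinite μ] [IsFiniteMeasure ν] {κ : Kernel α β}
    {η : Kernel β α} [IsSFiniteKernel κ] [IsFiniteKernel η] :
    ν ⊗ₘ η = (μ ⊗ₘ κ).map Prod.swap ↔ ∀ (A : Set α) (B : Set β),
      MeasurableSet A → MeasurableSet B → ∫⁻ a in A, κ a B ∂μ = ∫⁻ b in B, η b A ∂ν := by
  have h_rect : ∀ {B : Set β} {A : Set α}, MeasurableSet B → MeasurableSet A →
      (ν ⊗ₘ η) (B ×ˢ A) = ∫⁻ b in B, η b A ∂ν ∧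
        (μ ⊗ₘ κ).map Prod.swap (B ×ˢ A) = ∫⁻ a in A, κ a B ∂μ := fun hB hA ↦
    ⟨Measure.compProd_apply_prod hB hA, by
      rw [Measure.map_apply measurable_swap (hB.prod hA), Set.preimage_swap_prod,
        Measure.compProd_apply_prod hA hB]⟩
  rw [Measure.ext_prod_iff]
  refine ⟨fun h A B hA hB ↦ ?_, fun h B A hB hA ↦ ?_⟩
  · rw [← (h_rect hB hA).1, ← (h_rect hB hA).2, h hB hA]
  · rw [(h_rect hB hA).1, (h_rect hB hA).2, h A B hA hB]

theorem stmt_13_general {H D : Type*} [MeasurableSpace H] [MeasurableSpace D]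
    [MeasurableSpace.CountablyGenerated H]
    (P_H : Measure H) [IsProbabilityMeasure P_H] (hPH : IsPerfect P_H)
    (S : Kernel H D) [IsMarkovKernel S]
    (P_D : Measure D) (hPD : P_D = P_H.bind (fun h => S h)) :
    ∃ I : Kernel D H, IsMarkovKernel I ∧
      (∀ (A : Set H) (B : Set D), MeasurableSet A → MeasurableSet B →
        ∫⁻ h in A, S h B ∂P_H = ∫⁻ d in B, I d A ∂P_D) ∧
      ∀ (I' : Kernel D H), IsMarkovKernel I' →
        (∀ (A : Set H) (B : Set D), MeasurableSet A → MeasurableSet B →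
          ∫⁻ h in A, S h B ∂P_H = ∫⁻ d in B, I' d A ∂P_D) →
        ∀ᵐ d ∂P_D, I d = I' d := by
  have : Nonempty H := nonempty_of_isProbabilityMeasure P_H
  set ρ := (P_H ⊗ₘ S).map Prod.swap
  have hρ_fst : ρ.fst = P_D := by rw [Measure.fst_map_swap, Measure.snd_compProd, hPD]
  have hρ_snd : ρ.snd = P_H := by rw [Measure.snd_map_swap, Measure.fst_compProd]
  have : IsProbabilityMeasure P_D := by rw [hPD]; infer_instance
  obtain ⟨I, hI, hIρ⟩ := IsPerfect.exists_isMarkovKernel_compProd_eq (ρ := ρ) (hρ_snd ▸ hPH)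
  rw [hρ_fst] at hIρ
  refine ⟨I, hI, Measure.compProd_eq_map_swap_iff.1 hIρ, fun I' _ hI'ρ ↦ ?_⟩
  exact Kernel.ae_eq_of_compProd_eq (hIρ.trans (Measure.compProd_eq_map_swap_iff.2 hI'ρ).symm)

/-- Bayesian inference: given a perfect prior `P_H` and a sampling distribution `S`
whose prior predictive `P_D = P_H.bind S` is perfect, there is an inference map `I`
satisfying the product rule, unique up to a set of `P_D`-measure zero. -/
theorem stmt_13 {H D : Type*} [MeasurableSpace H] [MeasurableSpace D]
    [MeasurableSpace.CountablyGenerated H] [MeasurableSpace.CountablyGenerated D]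
    (P_H : Measure H) [IsProbabilityMeasure P_H] (hPH : IsPerfect P_H)
    (S : Kernel H D) [IsMarkovKernel S]
    (P_D : Measure D) (hPD : P_D = P_H.bind (fun h => S h)) (hPDperf : IsPerfect P_D) :
    ∃ I : Kernel D H, IsMarkovKernel I ∧
      (∀ (A : Set H) (B : Set D), MeasurableSet A → MeasurableSet B →
        ∫⁻ h in A, S h B ∂P_H = ∫⁻ d in B, I d A ∂P_D) ∧
      ∀ (I' : Kernel D H), IsMarkovKernel I' →
        (∀ (A : Set H) (B : Set D), MeasurableSet A → MeasurableSet B →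
          ∫⁻ h in A, S h B ∂P_H = ∫⁻ d in B, I' d A ∂P_D) →
        ∀ᵐ d ∂P_D, I d = I' d :=
  stmt_13_general P_H hPH S P_D hPD
end
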